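/- For every integer i ≥ 1, δ_{i+1} − δ_i ≤ δ_i − δ_{i−1}; that is, the increments of the sequence (δ_i)_{i≥0} are non-increasing. -/
import Mathlib

/-- The `n`-th harmonic number `H_n = ∑_{j=1}^n 1/j` (with `H 0 = 0`). -/
noncomputable def H (n : ℕ) : ℝ := ∑ j ∈ Finset.Icc 1 n, (1 : ℝ) / (j : ℝ)

/-- `δ_i = (1/2^i)·H_i + (1 − 1/2^i)·∑_{q=1}^∞ H_{q+i}/2^q`. -/
noncomputable def δ (i : ℕ) : ℝ :=
  (1 / 2 ^ i) * H i + (1 - 1 / 2 ^ i) * ∑' q : ℕ, H (q + 1 + i) / 2 ^ (q + 1)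

lemma H_succ (n : ℕ) : H (n + 1) = H n + 1 / (n + 1) := by
  unfold H
  rw [Finset.sum_Icc_succ_top (by omega)]
  push_cast; ring

lemma H_nonneg (n : ℕ) : 0 ≤ H n := by
  unfold H
  apply Finset.sum_nonneg
  intro j _
  positivity

lemma H_le (n : ℕ) : H n ≤ n := by
  unfold H
  calc ∑ j ∈ Finset.Icc 1 n, (1:ℝ)/(j:ℝ) ≤ ∑ j ∈ Finset.Icc 1 n, 1 := by
        apply Finset.sum_le_sum
        intro j hj
        simp only [Finset.mem_Icc] at hj
        have : (1:ℝ) ≤ j := by exact_mod_cast hj.1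
        rw [div_le_one (by linarith)]
        exact this
    _ = (n : ℝ) := by simp [Nat.card_Icc]

lemma summable_aux (i : ℕ) : Summable (fun q : ℕ => H (q + 1 + i) / 2 ^ (q + 1)) := by
  have h1 : Summable (fun q : ℕ => ((q : ℝ) + 1 + i) * (1/2) ^ (q + 1)) := by
    have := (summable_pow_mul_geometric_of_norm_lt_one (R := ℝ) 1 (r := 1/2) (by norm_num)).mul_left (1/2)
    have h2 : Summable (fun q : ℕ => ((1 : ℝ) + i) * (1/2) ^ (q+1)) :=
      ((summable_geometric_of_lt_one (by norm_num) (by norm_num)).mul_left ((1:ℝ)+i)).comp_injective (add_left_injective 1)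
    have := this.add h2
    apply this.congr
    intro q
    simp [pow_succ]
    ring
  apply Summable.of_nonneg_of_le _ _ h1
  · intro q
    exact div_nonneg (H_nonneg _) (by positivity)
  · intro q
    rw [div_le_iff₀ (by positivity)]
    calc H (q + 1 + i) ≤ ((q + 1 + i : ℕ) : ℝ) := H_le _
      _ = ((q:ℝ)+1+i) := by push_cast; ring
      _ = ((q:ℝ)+1+i) * (1/2)^(q+1) * 2^(q+1) := by
          rw [one_div, inv_pow, mul_assoc, inv_mul_cancel₀ (by positivity), mul_one]

noncomputable def S (i : ℕ) : ℝ := ∑' q : ℕ, H (q + 1 + i) / 2 ^ (q + 1)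

lemma S_rec (i : ℕ) : S (i + 1) = 2 * S i - H (i + 1) := by
  have h := Summable.tsum_eq_zero_add (summable_aux i)
  have hshift : ∑' q : ℕ, H (q + 1 + 1 + i) / 2 ^ (q + 1 + 1)
      = (1/2) * S (i + 1) := by
    rw [S, ← tsum_mul_left]
    congr 1
    ext q
    have : q + 1 + 1 + i = q + 1 + (i + 1) := by omega
    rw [this, pow_succ]
    ring
  simp only [Nat.zero_add, pow_one] at h
  rw [hshift] at h
  have key : S i = H (1 + i) / 2 + 1/2 * S (i + 1) := by rw [S]; exact h
  have h1i : (1 : ℕ) + i = i + 1 := by omega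
  rw [h1i] at key
  linarith

lemma S_diff_le (i : ℕ) : S (i + 1) - S i ≤ 1 / (i + 2) := by
  have hgeom : Summable (fun q : ℕ => (1 / ((i:ℝ) + 2)) * (1/2) ^ (q+1)) :=
    ((summable_geometric_of_lt_one (by norm_num) (by norm_num)).mul_left _).comp_injective
      (add_left_injective 1)
  have hle : S (i + 1) ≤ S i + 1 / (i + 2) := by
    rw [S, S]
    have := Summable.tsum_le_tsum (f := fun q : ℕ => H (q + 1 + (i+1)) / 2 ^ (q + 1))
      (g := fun q : ℕ => H (q + 1 + i) / 2 ^ (q + 1) + (1 / ((i:ℝ) + 2)) * (1/2) ^ (q+1))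
      ?_ (summable_aux (i+1)) ((summable_aux i).add hgeom)
    · rw [Summable.tsum_add (summable_aux i) hgeom, tsum_mul_left] at this
      have hg : ∑' q : ℕ, ((1:ℝ)/2) ^ (q+1) = 1 := by
        calc ∑' q : ℕ, ((1:ℝ)/2) ^ (q+1) = ∑' q : ℕ, (1/2) * ((1:ℝ)/2) ^ q := by
              congr 1; ext q; ring
          _ = (1/2) * (1 - 1/2)⁻¹ := by
              rw [tsum_mul_left, tsum_geometric_of_lt_one (by norm_num) (by norm_num)]
          _ = 1 := by norm_num
      rw [hg, mul_one] at this
      exact this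
    · intro q
      show H (q + 1 + (i + 1)) / 2 ^ (q + 1) ≤
        H (q + 1 + i) / 2 ^ (q + 1) + 1 / ((i:ℝ) + 2) * (1/2) ^ (q+1)
      have h1 : q + 1 + (i + 1) = (q + 1 + i) + 1 := by omega
      rw [h1, H_succ]
      have h2 : (1:ℝ) / ((q:ℝ) + 1 + i + 1) ≤ 1 / ((i:ℝ) + 2) := by
        apply one_div_le_one_div_of_le (by positivity)
        push_cast; linarith [Nat.cast_nonneg (α := ℝ) q]
      have h3 : (0:ℝ) < 2 ^ (q+1) := by positivity
      rw [add_div]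
      gcongr
      rw [div_le_iff₀ h3]
      calc (1:ℝ) / (↑(q + 1 + i) + 1) ≤ 1 / ((i:ℝ) + 2) := by
            apply one_div_le_one_div_of_le (by positivity)
            push_cast; linarith [Nat.cast_nonneg (α := ℝ) q]
        _ = (1 / ((i:ℝ)+2)) * (1/2)^(q+1) * 2^(q+1) := by
            rw [one_div (2:ℝ), inv_pow, mul_assoc, inv_mul_cancel₀ (by positivity), mul_one]
  linarith

/-- For every integer `i ≥ 1`, `δ_{i+1} − δ_i ≤ δ_i − δ_{i−1}`: the increments of the
sequence `(δ_i)` are non-increasing. -/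
theorem stmt_17 (i : ℕ) (hi : 1 ≤ i) : δ (i + 1) - δ i ≤ δ i - δ (i - 1) := by
  obtain ⟨j, rfl⟩ : ∃ j, i = j + 1 := ⟨i - 1, by omega⟩
  simp only [Nat.add_sub_cancel]
  have hδ : ∀ k, δ k = (1 / 2 ^ k) * H k + (1 - 1 / 2 ^ k) * S k := fun k => rfl
  have r1 := S_rec j
  have r2 := S_rec (j + 1)
  have d := S_diff_le j
  have hH1 := H_succ j
  have hH2 := H_succ (j + 1)
  have hx : (0:ℝ) < 2 ^ j := by positivity
  have hident : δ (j + 1 + 1) - δ (j + 1) - (δ (j + 1) - δ j) =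
      (S (j + 1) - S j) - 1 / ((j:ℝ) + 2) + (1 / 2 ^ (j+1)) * (1 / ((j:ℝ) + 2))
        - (1 / 2 ^ j) * (1 / ((j:ℝ) + 1)) := by
    rw [hδ, hδ, hδ, r2, r1, hH2, hH1]
    push_cast
    field_simp
    ring
  have hb : (1 / (2:ℝ) ^ (j+1)) * (1 / ((j:ℝ) + 2)) ≤ (1 / 2 ^ j) * (1 / ((j:ℝ) + 1)) := by
    rw [div_mul_div_comm, div_mul_div_comm, one_mul]
    apply one_div_le_one_div_of_le (by positivity)
    have : (2:ℝ) ^ (j+1) = 2 * 2 ^ j := by ring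
    rw [this]
    nlinarith [Nat.cast_nonneg (α := ℝ) j]
  have hd2 : S (j + 1) - S j ≤ 1 / ((j:ℝ) + 2) := by
    have : ((j:ℝ) + 2) = ((j:ℕ):ℝ) + 2 := by push_cast; ring
    rw [this]
    exact d
  linarith
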